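/- Suppose the partition {Ω_j} has spectral gap at least Λ > 0. Then for every f ∈ ℓ²(V) whose weighted gradient norm ‖∇f‖ is finite and every α > 0, ‖f‖² ≤ ((1+α)/α)·(1/Λ)·‖∇f‖² + (1+α)·∑_j |⟨f, ξ_j⟩|². -/

import Mathlib

/-!
On each block `Ω j`, subtracting from `f` its mean gives a function of sum zero, so the spectral
gap bounds `∑_{Ω j} |f|² - |⟨f, ξ_j⟩|²`, the squared distance of `f|Ω j` to the constants, by
`Λ⁻¹` times the gradient energy inside `Ω j`. Summing over the blocks, whose internal edges are
only part of all edges, gives `‖f‖² ≤ Λ⁻¹ ‖∇f‖² + ∑ j, |⟨f, ξ_j⟩|²`; both coefficients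
`(1 + α) / α` and `1 + α` are at least `1`.
-/

open Finset Function

section DisjointFinsets

variable {ι α E : Type*} [NormedAddCommGroup E] [CompleteSpace E] {s : ι → Finset α}

theorem injective_sigma_val_of_pairwise_disjoint (hs : Pairwise (Disjoint on s)) :
    Injective fun x : Σ i, s i => (x.2 : α) := by
  rintro ⟨i, a, ha⟩ ⟨j, b, hb⟩ (rfl : a = b)
  obtain rfl : i = j := by
    by_contra hij
    exact Finset.disjoint_left.mp (hs hij) ha hb
  rfl

theorem hasSum_sum_finset_of_pairwise_disjoint (hs : Pairwise (Disjoint on s)) {φ : α → E}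
    (hφ : Summable φ) :
    HasSum (fun i => ∑ a ∈ s i, φ a) (∑' x : Σ i, s i, φ x.2) :=
  (hφ.comp_injective (injective_sigma_val_of_pairwise_disjoint hs)).hasSum.sigma fun i =>
    sum_coe_sort (s i) φ ▸ hasSum_fintype _

theorem tsum_sum_finset_le_tsum_of_nonneg (hs : Pairwise (Disjoint on s)) {φ : α → ℝ}
    (hφ : Summable φ) (hφ_nonneg : ∀ a, 0 ≤ φ a) :
    ∑' i, ∑ a ∈ s i, φ a ≤ ∑' a, φ a :=
  (hasSum_sum_finset_of_pairwise_disjoint hs hφ).tsum_eq ▸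
    tsum_comp_le_tsum_of_inj hφ hφ_nonneg (injective_sigma_val_of_pairwise_disjoint hs)

theorem tsum_sum_finset_of_partition (hs : Pairwise (Disjoint on s)) (hcover : ∀ a, ∃ i, a ∈ s i)
    {φ : α → E} (hφ : Summable φ) :
    ∑' i, ∑ a ∈ s i, φ a = ∑' a, φ a := by
  have hbij : Bijective fun x : Σ i, s i => (x.2 : α) :=
    ⟨injective_sigma_val_of_pairwise_disjoint hs, fun a =>
      let ⟨i, hi⟩ := hcover a; ⟨⟨i, a, hi⟩, rfl⟩⟩
  rw [(hasSum_sum_finset_of_pairwise_disjoint hs hφ).tsum_eq]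
  exact (Equiv.ofBijective _ hbij).tsum_eq φ

end DisjointFinsets

theorem sum_norm_sub_average_sq {α F : Type*} [NormedAddCommGroup F] [InnerProductSpace ℝ F]
    (s : Finset α) (f : α → F) :
    ∑ a ∈ s, ‖f a - (#s : ℝ)⁻¹ • ∑ b ∈ s, f b‖ ^ 2
      = ∑ a ∈ s, ‖f a‖ ^ 2 - (#s : ℝ)⁻¹ * ‖∑ b ∈ s, f b‖ ^ 2 := by
  set S := ∑ b ∈ s, f b
  have hcross : ∑ a ∈ s, inner ℝ (f a) ((#s : ℝ)⁻¹ • S) = (#s : ℝ)⁻¹ * ‖S‖ ^ 2 := by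
    rw [← sum_inner, real_inner_smul_right, real_inner_self_eq_norm_sq]
  simp only [norm_sub_sq_real, sum_add_distrib, sum_sub_distrib, ← mul_sum, hcross, sum_const,
    nsmul_eq_mul, norm_smul, mul_pow, norm_inv, Real.norm_natCast]
  rcases eq_or_ne (#s : ℝ) 0 with h | h
  · simp [h]
  · field_simp; ring

theorem inv_card_mul_norm_sum_sq_le {α F : Type*} [NormedAddCommGroup F] [InnerProductSpace ℝ F]
    (s : Finset α) (f : α → F) :
    (#s : ℝ)⁻¹ * ‖∑ a ∈ s, f a‖ ^ 2 ≤ ∑ a ∈ s, ‖f a‖ ^ 2 :=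
  sub_nonneg.mp <| sum_norm_sub_average_sq s f ▸ sum_nonneg fun _ _ => sq_nonneg _

theorem mul_sum_norm_sq_sub_le_of_spectralGap {α F : Type*} [NormedAddCommGroup F]
    [InnerProductSpace ℝ F] (s : Finset α) (w : α → α → ℝ) (Λ : ℝ)
    (hgap : ∀ g : α → F, ∑ a ∈ s, g a = 0 →
      Λ * ∑ a ∈ s, ‖g a‖ ^ 2 ≤ 1 / 2 * ∑ a ∈ s, ∑ b ∈ s, ‖g a - g b‖ ^ 2 * w a b)
    (f : α → F) :
    Λ * (∑ a ∈ s, ‖f a‖ ^ 2 - (#s : ℝ)⁻¹ * ‖∑ a ∈ s, f a‖ ^ 2)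
      ≤ 1 / 2 * ∑ a ∈ s, ∑ b ∈ s, ‖f a - f b‖ ^ 2 * w a b := by
  have hmean : ∑ a ∈ s, (f a - (#s : ℝ)⁻¹ • ∑ b ∈ s, f b) = 0 := by
    rcases s.eq_empty_or_nonempty with rfl | hs
    · simp
    rw [sum_sub_distrib, sum_const, ← Nat.cast_smul_eq_nsmul ℝ, smul_smul,
      mul_inv_cancel₀ (by positivity), one_smul, sub_self]
  simpa only [sub_sub_sub_cancel_right, sum_norm_sub_average_sq] using hgap _ hmean

theorem tsum_norm_sq_le_of_spectralGap {V J F : Type*} [NormedAddCommGroup F]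
    [InnerProductSpace ℝ F] (w : V → V → ℝ) (hw : ∀ u v, 0 ≤ w u v) (Ω : J → Finset V)
    (hdisj : Pairwise (Disjoint on Ω)) (hcover : ∀ v, ∃ j, v ∈ Ω j) {Λ : ℝ} (hΛ : 0 < Λ)
    (hgap : ∀ j, ∀ g : V → F, ∑ v ∈ Ω j, g v = 0 →
      Λ * ∑ v ∈ Ω j, ‖g v‖ ^ 2 ≤ 1 / 2 * ∑ u ∈ Ω j, ∑ v ∈ Ω j, ‖g u - g v‖ ^ 2 * w u v)
    {f : V → F} (hf : Summable fun v => ‖f v‖ ^ 2)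
    (hgrad : Summable fun p : V × V => ‖f p.1 - f p.2‖ ^ 2 * w p.1 p.2) :
    ∑' v, ‖f v‖ ^ 2 ≤
      Λ⁻¹ * (1 / 2 * ∑' p : V × V, ‖f p.1 - f p.2‖ ^ 2 * w p.1 p.2) +
        ∑' j, (#(Ω j) : ℝ)⁻¹ * ‖∑ v ∈ Ω j, f v‖ ^ 2 := by
  set energy : V × V → ℝ := fun p => ‖f p.1 - f p.2‖ ^ 2 * w p.1 p.2
  have hdisj₂ : Pairwise (Disjoint on fun j => Ω j ×ˢ Ω j) := fun i j hij =>
    disjoint_product.mpr (.inl (hdisj hij))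
  have hblock (j : J) : ∑ v ∈ Ω j, ‖f v‖ ^ 2 ≤
      Λ⁻¹ * (1 / 2 * ∑ p ∈ Ω j ×ˢ Ω j, energy p) + (#(Ω j) : ℝ)⁻¹ * ‖∑ v ∈ Ω j, f v‖ ^ 2 := by
    have := mul_sum_norm_sq_sub_le_of_spectralGap (Ω j) w Λ (hgap j) f
    rw [← sum_product' (f := fun u v => ‖f u - f v‖ ^ 2 * w u v), ← le_div_iff₀' hΛ] at this
    rw [inv_mul_eq_div]
    linarith
  have hAsum := (hasSum_sum_finset_of_pairwise_disjoint hdisj hf).summable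
  have hEsum := ((hasSum_sum_finset_of_pairwise_disjoint hdisj₂ hgrad).summable).mul_left (1 / 2)
  have hBsum : Summable fun j => (#(Ω j) : ℝ)⁻¹ * ‖∑ v ∈ Ω j, f v‖ ^ 2 :=
    hAsum.of_nonneg_of_le (fun j => by positivity) fun j => inv_card_mul_norm_sum_sq_le _ _
  calc ∑' v, ‖f v‖ ^ 2 = ∑' j, ∑ v ∈ Ω j, ‖f v‖ ^ 2 :=
        (tsum_sum_finset_of_partition hdisj hcover hf).symm
    _ ≤ ∑' j, (Λ⁻¹ * (1 / 2 * ∑ p ∈ Ω j ×ˢ Ω j, energy p) +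
          (#(Ω j) : ℝ)⁻¹ * ‖∑ v ∈ Ω j, f v‖ ^ 2) :=
        hAsum.tsum_le_tsum hblock ((hEsum.mul_left _).add hBsum)
    _ = Λ⁻¹ * (1 / 2 * ∑' j, ∑ p ∈ Ω j ×ˢ Ω j, energy p) +
          ∑' j, (#(Ω j) : ℝ)⁻¹ * ‖∑ v ∈ Ω j, f v‖ ^ 2 := by
        rw [(hEsum.mul_left _).tsum_add hBsum, tsum_mul_left, tsum_mul_left]
    _ ≤ Λ⁻¹ * (1 / 2 * ∑' p, energy p) + ∑' j, (#(Ω j) : ℝ)⁻¹ * ‖∑ v ∈ Ω j, f v‖ ^ 2 := by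
        gcongr
        exact tsum_sum_finset_le_tsum_of_nonneg hdisj₂ hgrad fun p =>
          mul_nonneg (sq_nonneg _) (hw _ _)

theorem stmt_10 {V : Type*} {J : Type*} (w : V → V → ℝ)
    (hnn : ∀ u v, 0 ≤ w u v)
    (Ω : J → Finset V)
    (hdisj : ∀ i j, i ≠ j → Disjoint (Ω i) (Ω j)) (hcover : ∀ v : V, ∃ j, v ∈ Ω j)
    (Λ : ℝ) (hΛ : 0 < Λ)
    (hgap : ∀ j, ∀ g : V → ℂ, ∑ v ∈ Ω j, g v = 0 →
      Λ * ∑ v ∈ Ω j, ‖g v‖ ^ 2 ≤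
        1 / 2 * ∑ u ∈ Ω j, ∑ v ∈ Ω j, ‖g u - g v‖ ^ 2 * w u v)
    (f : V → ℂ) (hf : Summable fun v => ‖f v‖ ^ 2)
    (hgrad : Summable fun p : V × V => ‖f p.1 - f p.2‖ ^ 2 * w p.1 p.2)
    (α : ℝ) (hα : 0 < α) :
    ∑' v, ‖f v‖ ^ 2 ≤
      ((1 + α) / α) * (1 / Λ) *
          (1 / 2 * ∑' p : V × V, ‖f p.1 - f p.2‖ ^ 2 * w p.1 p.2) +
        (1 + α) * ∑' j, ((Ω j).card : ℝ)⁻¹ * ‖∑ v ∈ Ω j, f v‖ ^ 2 := by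
  refine (tsum_norm_sq_le_of_spectralGap w hnn Ω hdisj hcover hΛ hgap hf hgrad).trans ?_
  have hgrad_nonneg : 0 ≤ 1 / 2 * ∑' p : V × V, ‖f p.1 - f p.2‖ ^ 2 * w p.1 p.2 :=
    mul_nonneg (by norm_num) (tsum_nonneg fun p => mul_nonneg (sq_nonneg _) (hnn _ _))
  have hmean_nonneg : 0 ≤ ∑' j, ((Ω j).card : ℝ)⁻¹ * ‖∑ v ∈ Ω j, f v‖ ^ 2 :=
    tsum_nonneg fun j => by positivity
  have hα_le : 1 ≤ (1 + α) / α := by rw [le_div_iff₀ hα]; linarith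
  refine add_le_add (mul_le_mul_of_nonneg_right ?_ hgrad_nonneg)
    (le_mul_of_one_le_left hmean_nonneg (by linarith))
  rw [one_div]
  exact le_mul_of_one_le_left (inv_nonneg.mpr hΛ.le) hα_le
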